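/- arXiv:2511.03062 — 5 statements merged into one kernel-verified Lean document; each statement's English description precedes it below -/
import Mathlib

section
/- Let A and Ã be irrational real numbers and τ, t̃ real numbers. Suppose that for all integers m, n one has A·n + τ ≤ m if and only if Ã·n + t̃ ≤ m. Then A = Ã and τ = t̃. -/
open AddSubgroup Set

private lemma repr_closure (A : ℝ) :
    ∀ g ∈ AddSubgroup.closure ({1, A} : Set ℝ), ∃ m n : ℤ, g = m + n * A := by
  intro g hg
  refine AddSubgroup.closure_induction ?_ ?_ ?_ ?_ hg
  · rintro x (rfl | rfl)
    · exact ⟨1, 0, by push_cast; ring⟩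
    · exact ⟨0, 1, by push_cast; ring⟩
  · exact ⟨0, 0, by push_cast; ring⟩
  · rintro x y _ _ ⟨m1, n1, rfl⟩ ⟨m2, n2, rfl⟩
    exact ⟨m1 + m2, n1 + n2, by push_cast; ring⟩
  · rintro x _ ⟨m, n, rfl⟩
    exact ⟨-m, -n, by push_cast; ring⟩

private lemma aux_not_lt (A τ t' : ℝ) (hA : Irrational A)
    (h : ∀ m n : ℤ, A * n + τ ≤ m ↔ A * n + t' ≤ m) : ¬ τ < t' := by
  intro hlt
  set S := AddSubgroup.closure ({1, A} : Set ℝ) with hSdef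
  have hdense : Dense (S : Set ℝ) := by
    rcases S.dense_or_cyclic with hd | ⟨a, ha⟩
    · exact hd
    · exfalso
      have h1 : (1 : ℝ) ∈ S := subset_closure (by simp)
      have hAmem : A ∈ S := subset_closure (by simp)
      rw [ha, AddSubgroup.mem_closure_singleton] at h1 hAmem
      obtain ⟨k, hk⟩ := h1
      obtain ⟨l, hl⟩ := hAmem
      rw [zsmul_eq_mul] at hk hl
      have hk0 : (k : ℝ) ≠ 0 := by
        intro h0; rw [h0, zero_mul] at hk; exact one_ne_zero hk.symm
      have : A = ((l / k : ℚ) : ℝ) := by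
        push_cast
        field_simp
        rw [← hl]
        linear_combination (l:ℝ) * hk
      exact (Rat.not_irrational _) (this ▸ hA)
  obtain ⟨g, hgS, hg1, hg2⟩ := hdense.exists_between hlt
  obtain ⟨m, n, rfl⟩ := repr_closure A g hgS
  have := (h m (-n)).mp (by push_cast; linarith)
  push_cast at this
  linarith

theorem stmt_0 (A A' τ t' : ℝ) (hA : Irrational A) (hA' : Irrational A')
    (h : ∀ m n : ℤ, A * n + τ ≤ m ↔ A' * n + t' ≤ m) :
    A = A' ∧ τ = t' := by
  have hceil : ∀ n : ℤ, ⌈A * n + τ⌉ = ⌈A' * n + t'⌉ := by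
    intro n
    apply le_antisymm
    · exact Int.ceil_le.2 ((h _ n).2 (Int.le_ceil _))
    · exact Int.ceil_le.2 ((h _ n).1 (Int.le_ceil _))
  have hclose : ∀ n : ℤ, |(A * n + τ) - (A' * n + t')| < 1 := by
    intro n
    have h1 : A * n + τ ≤ (⌈A * n + τ⌉ : ℝ) := Int.le_ceil _
    have h2 : A' * n + t' ≤ (⌈A' * n + t'⌉ : ℝ) := Int.le_ceil _
    have h3 : ((⌈A * n + τ⌉ : ℤ) : ℝ) < (A * n + τ) + 1 := Int.ceil_lt_add_one _
    have h4 : ((⌈A' * n + t'⌉ : ℤ) : ℝ) < (A' * n + t') + 1 := Int.ceil_lt_add_one _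
    rw [hceil n] at h1 h3
    rw [abs_sub_lt_iff]
    constructor <;> linarith
  have hAeq : A = A' := by
    by_contra hne
    have hd : |A - A'| > 0 := abs_pos.2 (sub_ne_zero.2 hne)
    obtain ⟨N, hN⟩ := exists_nat_gt ((1 + |τ - t'|) / |A - A'|)
    have hN' : 1 + |τ - t'| < |A - A'| * N := by
      rw [div_lt_iff₀ hd] at hN; linarith
    have hc := hclose (N : ℤ)
    have : |(A - A') * N| ≤ |(A * N + τ) - (A' * N + t')| + |τ - t'| := by
      have : (A - A') * N = ((A * N + τ) - (A' * N + t')) - (τ - t') := by ring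
      rw [this]
      exact abs_sub _ _
    rw [abs_mul, abs_of_nonneg (by positivity : (0:ℝ) ≤ (N:ℝ))] at this
    push_cast at hc
    linarith
  subst hAeq
  refine ⟨rfl, le_antisymm ?_ ?_⟩
  · exact le_of_not_gt (aux_not_lt A t' τ hA (fun m n => (h m n).symm))
  · exact le_of_not_gt (aux_not_lt A τ t' hA h)
end

section
/- Let 0 < Λ < 1 and let (ε_n), (ε̃_n) be sequences of reals in (0, 1/2) with ε̃_n = ε_n·(1 + r_n) where r_n → 0 and ε_n → 0. If ln(−ln ε̃_n) = −n·ln Λ + β + θ·Λⁿ + o(Λⁿ), then also ln(−ln ε_n) = −n·ln Λ + β + θ·Λⁿ + o(Λⁿ). -/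
/-!
Write `L n = -log ε' n`, so that `-log ε n = L n + log (1 + r n)`. The hypothesis forces
`L n * Λ ^ n → exp β`, hence `1 / L n = O(Λ ^ n)`, and therefore
`log (-log ε n) - log (L n) = log (1 + log (1 + r n) / L n) = O(log (1 + r n) / L n) = o(Λ ^ n)`.
-/

open Filter Asymptotics Topology Real

lemma Real.isBigO_log_one_add : (fun x : ℝ => log (1 + x)) =O[𝓝 0] fun x => x := by
  simpa [Function.comp_def] using (hasDerivAt_log one_ne_zero).isBigO_sub.comp_tendsto
    ((continuous_const_add (1 : ℝ)).tendsto' 0 1 (add_zero 1))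

section

variable {α : Type*} {l : Filter α}

lemma tendsto_mul_pow_of_tendsto_log_add {L : ℕ → ℝ} {Λ β : ℝ} (hΛ : 0 < Λ)
    (hL : ∀ᶠ n in atTop, 0 < L n)
    (h : Tendsto (fun n => log (L n) + n * log Λ) atTop (𝓝 β)) :
    Tendsto (fun n => L n * Λ ^ n) atTop (𝓝 (exp β)) := by
  refine ((continuous_exp.tendsto β).comp h).congr' ?_
  filter_upwards [hL] with n hn
  rw [Function.comp_apply, exp_add, exp_log hn, ← log_pow, exp_log (pow_pos hΛ n)]

lemma isBigO_inv_of_tendsto_mul {L g : α → ℝ} {c : ℝ} (h : Tendsto (fun x => L x * g x) l (𝓝 c))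
    (hc : c ≠ 0) : (fun x => (L x)⁻¹) =O[l] g := by
  have hinv : (fun x => (L x * g x)⁻¹) =O[l] fun _ => (1 : ℝ) :=
    (h.inv₀ hc).isBigO_one ℝ
  refine (hinv.mul (isBigO_refl g l)).congr' ?_ (by simp)
  filter_upwards [h.eventually_ne hc] with x hx
  rw [mul_inv, mul_assoc, inv_mul_cancel₀ (right_ne_zero_of_mul hx), mul_one]

lemma isLittleO_log_add_sub_log {L a g : α → ℝ} (hL : ∀ᶠ x in l, 0 < L x)
    (hLinv : (fun x => (L x)⁻¹) =O[l] g) (hg : Tendsto g l (𝓝 0)) (ha : Tendsto a l (𝓝 0)) :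
    (fun x => log (L x + a x) - log (L x)) =o[l] g := by
  have hu : (fun x => a x * (L x)⁻¹) =o[l] g := by
    simpa using ((isLittleO_one_iff ℝ).mpr ha).mul_isBigO hLinv
  have hu0 : Tendsto (fun x => a x * (L x)⁻¹) l (𝓝 0) := hu.trans_tendsto hg
  refine ((isBigO_log_one_add.comp_tendsto hu0).trans_isLittleO hu).congr' ?_ EventuallyEq.rfl
  filter_upwards [hL, hu0.eventually_ne (show (0:ℝ) ≠ -1 by norm_num)] with x hLx hux
  have h1u : 1 + a x * (L x)⁻¹ ≠ 0 := fun h => hux (by linarith)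
  have hsplit : L x + a x = L x * (1 + a x * (L x)⁻¹) := by field_simp
  rw [Function.comp_apply, hsplit, log_mul hLx.ne' h1u]
  ring

end

theorem stmt_7_general (Λ β θ : ℝ) (hΛ0 : 0 < Λ) (hΛ1 : Λ < 1)
    (ε ε' r : ℕ → ℝ)
    (hε' : ∀ n, ε' n ∈ Set.Ioo (0 : ℝ) (1/2))
    (hr : Tendsto r atTop (nhds 0))
    (hrel : ∀ n, ε' n = ε n * (1 + r n))
    (hasy : (fun n => Real.log (-Real.log (ε' n)) -
        (-(n : ℝ) * Real.log Λ + β + θ * Λ ^ n)) =o[atTop] fun n => Λ ^ n) :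
    (fun n => Real.log (-Real.log (ε n)) -
        (-(n : ℝ) * Real.log Λ + β + θ * Λ ^ n)) =o[atTop] fun n => Λ ^ n := by
  have hpow : Tendsto (fun n => Λ ^ n) atTop (𝓝 0) :=
    tendsto_pow_atTop_nhds_zero_of_lt_one hΛ0.le hΛ1
  have hL : ∀ n, 0 < -log (ε' n) := fun n =>
    neg_pos.mpr (log_neg (hε' n).1 (by linarith [(hε' n).2]))
  have hsplit : ∀ n, -log (ε n) = -log (ε' n) + log (1 + r n) := fun n => by
    have h := (hε' n).1.ne'
    rw [hrel] at h ⊢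
    rw [log_mul (left_ne_zero_of_mul h) (right_ne_zero_of_mul h)]
    ring
  have hlogL : Tendsto (fun n => log (-log (ε' n)) + n * log Λ) atTop (𝓝 β) := by
    have h := (hasy.trans_tendsto hpow).add ((tendsto_const_nhds (x := β)).add (hpow.const_mul θ))
    rw [zero_add, mul_zero, add_zero] at h
    exact h.congr fun n => by ring
  have hlog1r : Tendsto (fun n => log (1 + r n)) atTop (𝓝 0) := by
    simpa using ((continuous_const_add 1).tendsto 0).comp hr |>.log (by norm_num)
  have hdiff := isLittleO_log_add_sub_log (Eventually.of_forall hL)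
    (isBigO_inv_of_tendsto_mul (tendsto_mul_pow_of_tendsto_log_add hΛ0
      (Eventually.of_forall hL) hlogL) (exp_pos β).ne') hpow hlog1r
  refine (hasy.add hdiff).congr_left fun n => ?_
  rw [hsplit]
  ring

theorem stmt_7 (Λ β θ : ℝ) (hΛ0 : 0 < Λ) (hΛ1 : Λ < 1)
    (ε ε' r : ℕ → ℝ)
    (hε : ∀ n, ε n ∈ Set.Ioo (0 : ℝ) (1/2)) (hε' : ∀ n, ε' n ∈ Set.Ioo (0 : ℝ) (1/2))
    (hr : Tendsto r atTop (nhds 0)) (hε0 : Tendsto ε atTop (nhds 0))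
    (hrel : ∀ n, ε' n = ε n * (1 + r n)) (hrpos : ∀ n, 0 < 1 + r n)
    (hasy : (fun n => Real.log (-Real.log (ε' n)) -
        (-(n : ℝ) * Real.log Λ + β + θ * Λ ^ n)) =o[atTop] fun n => Λ ^ n) :
    (fun n => Real.log (-Real.log (ε n)) -
        (-(n : ℝ) * Real.log Λ + β + θ * Λ ^ n)) =o[atTop] fun n => Λ ^ n :=
  stmt_7_general Λ β θ hΛ0 hΛ1 ε ε' r hε' hr hrel hasy
end

section
/- Let g : [0, r) → ℝ be C², with g(0) = 0, g'(0) = 1 (so g(y) = y + R(y) with R(y) = O(y²)), and g(y) > 0 for y > 0. Define h(x) = −1/ln x for x ∈ (0, 1) with h(0) = 0, and H = h⁻¹ ∘ g ∘ h, i.e. H(x) = exp(−1/g(−1/ln x)) for x ∈ (0,1), H(0) = 0. Then H is differentiable at 0 with H'(0⁺) = lim_{x→0⁺} H'(x) = e^(g''(0)/2), and H is C¹ on [0, x₀) for small x₀. -/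
/-!
In the chart `y = -1/log x` one has `exp (1/y) = 1/x`, hence
`H x / x = exp (1/y - 1/g y)` and `H' x = exp (1/y - 1/g y) * g' y * (y / g y) ^ 2`.
Since `g y = y + g''(0) y² / 2 + o(y²)`, `1/y - 1/g y → g''(0) / 2` as `y → 0`, so both
expressions tend to `exp (g''(0) / 2)`: the first gives the one-sided derivative of `H` at `0`,
the second the continuity of `H'` there.
-/

open Filter Set Real Topology

theorem contDiffOn_one_Ico_of_tendsto_deriv {E : Type*} [NormedAddCommGroup E] [NormedSpace ℝ E]
    {f : ℝ → E} {a b : ℝ} {d : E} (hab : a < b) (hf : ContDiffOn ℝ 1 f (Ioo a b))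
    (hfa : HasDerivWithinAt f d (Ici a) a) (hlim : Tendsto (deriv f) (𝓝[>] a) (𝓝 d)) :
    ContDiffOn ℝ 1 f (Ico a b) := by
  have hfa' : HasDerivWithinAt f d (Ico a b) a := hfa.mono Ico_subset_Ici_self
  have hderiv_a : derivWithin f (Ico a b) a = d :=
    hfa'.derivWithin (uniqueDiffOn_Ico a b a ⟨le_rfl, hab⟩)
  have hderiv : ∀ x ∈ Ioo a b, derivWithin f (Ico a b) x = deriv f x := fun x hx =>
    derivWithin_of_mem_nhds (mem_of_superset (isOpen_Ioo.mem_nhds hx) Ioo_subset_Ico_self)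
  rw [contDiffOn_one_iff_derivWithin (uniqueDiffOn_Ico a b)]
  constructor
  · rintro x ⟨hax, hxb⟩
    rcases hax.eq_or_lt with rfl | hax
    · exact hfa'.differentiableWithinAt
    · exact ((hf.differentiableOn one_ne_zero x ⟨hax, hxb⟩).differentiableAt
        (isOpen_Ioo.mem_nhds ⟨hax, hxb⟩)).differentiableWithinAt
  · rintro x ⟨hax, hxb⟩
    rcases hax.eq_or_lt with hxa | hax
    · subst hxa
      have hright : ContinuousWithinAt (derivWithin f (Ico a b)) (Ioi a) a := by
        rw [ContinuousWithinAt, hderiv_a]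
        exact hlim.congr' (eventually_of_mem (Ioo_mem_nhdsGT hab) fun y hy => (hderiv y hy).symm)
      exact (continuousWithinAt_Ioi_iff_Ici.mp hright).mono Ico_subset_Ici_self
    · have hx : Ioo a b ∈ 𝓝 x := isOpen_Ioo.mem_nhds ⟨hax, hxb⟩
      refine ContinuousAt.continuousWithinAt ?_
      refine ((hf.continuousOn_deriv_of_isOpen isOpen_Ioo le_rfl).continuousAt hx).congr ?_
      exact eventually_of_mem hx fun y hy => (hderiv y hy).symm

theorem tendsto_neg_inv_log_nhdsGT_zero :
    Tendsto (fun x => -(log x)⁻¹) (𝓝[>] 0) (𝓝[>] 0) := by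
  refine tendsto_nhdsWithin_iff.mpr ⟨?_, ?_⟩
  · refine (tendsto_neg_atBot_atTop.comp tendsto_log_nhdsGT_zero).inv_tendsto_atTop.congr
      fun x => ?_
    simp [inv_neg]
  · filter_upwards [Ioo_mem_nhdsGT one_pos] with x hx
    exact neg_pos.mpr (inv_lt_zero.mpr (log_neg hx.1 hx.2))

theorem exp_inv_neg_inv_log_sub {x : ℝ} (hx : 0 < x) (a : ℝ) :
    exp ((-(log x)⁻¹)⁻¹ - a) = exp (-a) / x := by
  rw [inv_neg, inv_inv, ← neg_add', exp_neg, exp_add, exp_log hx, exp_neg]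
  field_simp

section

variable {g : ℝ → ℝ} {L : ℝ}

theorem tendsto_div_self_of_hasDerivAt_one (hg : HasDerivAt g 1 0) (hg0 : g 0 = 0) :
    Tendsto (fun t => g t / t) (𝓝[≠] 0) (𝓝 1) :=
  (hasDerivAt_iff_tendsto_slope.mp hg).congr fun t => by
    rw [slope_def_field, hg0, sub_zero, sub_zero]

theorem tendsto_sub_div_sq_of_hasDerivAt_deriv (hgd : Differentiable ℝ g)
    (hg'' : HasDerivAt (deriv g) L 0) (hg0 : g 0 = 0) (hg'0 : deriv g 0 = 1) :
    Tendsto (fun t => (g t - t) / t ^ 2) (𝓝[≠] 0) (𝓝 (L / 2)) := by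
  refine HasDerivAt.lhopital_zero_nhdsNE (f' := fun t => deriv g t - 1) (g' := fun t => 2 * t)
    (Eventually.of_forall fun t => (hgd t).hasDerivAt.sub (hasDerivAt_id t)) ?_ ?_ ?_ ?_ ?_
  · exact Eventually.of_forall fun t => by simpa using hasDerivAt_pow 2 t
  · filter_upwards [self_mem_nhdsWithin] with t ht
    exact mul_ne_zero two_ne_zero ht
  · simpa [hg0] using ((hgd.continuous.tendsto 0).sub tendsto_id).mono_left nhdsWithin_le_nhds
  · simpa using ((continuous_pow 2).tendsto (0 : ℝ)).mono_left nhdsWithin_le_nhds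
  · refine ((hasDerivAt_iff_tendsto_slope.mp hg'').div_const 2).congr fun t => ?_
    rw [slope_def_field, hg'0, sub_zero]
    ring

theorem tendsto_inv_sub_inv_of_hasDerivAt_deriv (hgd : Differentiable ℝ g)
    (hg'' : HasDerivAt (deriv g) L 0) (hg0 : g 0 = 0) (hg'0 : deriv g 0 = 1) :
    Tendsto (fun t => t⁻¹ - (g t)⁻¹) (𝓝[≠] 0) (𝓝 (L / 2)) := by
  have hratio := tendsto_div_self_of_hasDerivAt_one (hg'0 ▸ (hgd 0).hasDerivAt) hg0
  have hprod := (tendsto_sub_div_sq_of_hasDerivAt_deriv hgd hg'' hg0 hg'0).mul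
    (hratio.inv₀ one_ne_zero)
  rw [inv_one, mul_one] at hprod
  refine hprod.congr' ?_
  filter_upwards [self_mem_nhdsWithin,
    (hgd 0).hasDerivAt.eventually_ne (c := 0) (hg'0 ▸ one_ne_zero)] with t (ht : t ≠ 0) hgt
  field_simp

theorem tendsto_exp_inv_sub_inv_mul_deriv (hgd : Differentiable ℝ g)
    (hg'' : HasDerivAt (deriv g) L 0) (hg0 : g 0 = 0) (hg'0 : deriv g 0 = 1) :
    Tendsto (fun t => exp (t⁻¹ - (g t)⁻¹) * deriv g t * (t / g t) ^ 2) (𝓝[≠] 0)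
      (𝓝 (exp (L / 2))) := by
  have hexp := (continuous_exp.tendsto _).comp
    (tendsto_inv_sub_inv_of_hasDerivAt_deriv hgd hg'' hg0 hg'0)
  have hderiv : Tendsto (deriv g) (𝓝[≠] 0) (𝓝 1) :=
    hg'0 ▸ hg''.continuousAt.tendsto.mono_left nhdsWithin_le_nhds
  have hratio := (tendsto_div_self_of_hasDerivAt_one (hg'0 ▸ (hgd 0).hasDerivAt) hg0).inv₀
    one_ne_zero
  simpa using (hexp.mul hderiv).mul (hratio.pow 2)

theorem eventually_mem_Ioo_and_comp_neg_inv_log_ne_zero {g' : ℝ} (hg : HasDerivAt g g' 0)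
    (hg' : g' ≠ 0) : ∀ᶠ x in 𝓝[>] 0, x ∈ Ioo 0 1 ∧ g (-(log x)⁻¹) ≠ 0 :=
  Eventually.and (Ioo_mem_nhdsGT one_pos) <|
    (tendsto_neg_inv_log_nhdsGT_zero.mono_right (nhdsGT_le_nhdsNE 0)).eventually
      (hg.eventually_ne hg')

theorem contDiffAt_exp_neg_inv_comp_neg_inv_log {n : WithTop ℕ∞} {x : ℝ} (hg : ContDiff ℝ n g)
    (hx : x ≠ 0) (hlog : log x ≠ 0) (hgx : g (-(log x)⁻¹) ≠ 0) :
    ContDiffAt ℝ n (fun x => exp (-(g (-(log x)⁻¹))⁻¹)) x := by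
  fun_prop (disch := assumption)

theorem hasDerivAt_exp_neg_inv_comp_neg_inv_log {x y : ℝ} (hx : 0 < x) (hlog : log x ≠ 0)
    (hy : -(log x)⁻¹ = y) (hgd : DifferentiableAt ℝ g y) (hgy : g y ≠ 0) :
    HasDerivAt (fun x => exp (-(g (-(log x)⁻¹))⁻¹))
      (exp (y⁻¹ - (g y)⁻¹) * deriv g y * (y / g y) ^ 2) x := by
  subst hy
  refine ((hgd.hasDerivAt.comp x ((hasDerivAt_log hx.ne').inv hlog).neg).inv hgy).neg.exp
    |>.congr_deriv ?_
  simp only [Function.comp_apply, Pi.neg_apply, Pi.inv_apply]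
  rw [exp_inv_neg_inv_log_sub hx]
  field_simp

theorem tendsto_exp_neg_inv_comp_neg_inv_log_div_self (hgd : Differentiable ℝ g)
    (hg'' : HasDerivAt (deriv g) L 0) (hg0 : g 0 = 0) (hg'0 : deriv g 0 = 1) :
    Tendsto (fun x => exp (-(g (-(log x)⁻¹))⁻¹) / x) (𝓝[>] 0) (𝓝 (exp (L / 2))) := by
  refine ((continuous_exp.tendsto _).comp <| ((tendsto_inv_sub_inv_of_hasDerivAt_deriv hgd hg''
    hg0 hg'0).mono_left (nhdsGT_le_nhdsNE 0)).comp tendsto_neg_inv_log_nhdsGT_zero).congr' ?_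
  filter_upwards [self_mem_nhdsWithin] with x (hx : 0 < x)
  exact exp_inv_neg_inv_log_sub hx _

theorem tendsto_deriv_exp_neg_inv_comp_neg_inv_log (hgd : Differentiable ℝ g)
    (hg'' : HasDerivAt (deriv g) L 0) (hg0 : g 0 = 0) (hg'0 : deriv g 0 = 1) :
    Tendsto (deriv fun x => exp (-(g (-(log x)⁻¹))⁻¹)) (𝓝[>] 0) (𝓝 (exp (L / 2))) := by
  refine ((tendsto_exp_inv_sub_inv_mul_deriv hgd hg'' hg0 hg'0).mono_left
    (nhdsGT_le_nhdsNE 0)).comp tendsto_neg_inv_log_nhdsGT_zero |>.congr' ?_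
  filter_upwards [eventually_mem_Ioo_and_comp_neg_inv_log_ne_zero (hgd 0).hasDerivAt
    (hg'0 ▸ one_ne_zero)] with x ⟨hx, hgx⟩
  exact (hasDerivAt_exp_neg_inv_comp_neg_inv_log hx.1 (log_neg hx.1 hx.2).ne rfl (hgd _)
    hgx).deriv.symm

end

theorem stmt_11_general (g : ℝ → ℝ)
    (hg : ContDiff ℝ 2 g) (hg0 : g 0 = 0) (hg'0 : deriv g 0 = 1)
    (H : ℝ → ℝ)
    (hH : ∀ x : ℝ, H x = if 0 < x ∧ x < 1 then Real.exp (-(g (-(Real.log x)⁻¹))⁻¹) else 0) :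
    ∃ x₀ > 0, ContDiffOn ℝ 1 H (Set.Ico 0 x₀) ∧
      HasDerivWithinAt H (Real.exp (iteratedDeriv 2 g 0 / 2)) (Set.Ici 0) 0 ∧
      Tendsto (deriv H) (nhdsWithin 0 (Set.Ioi 0))
        (nhds (Real.exp (iteratedDeriv 2 g 0 / 2))) := by
  have hgd : Differentiable ℝ g := hg.differentiable two_ne_zero
  have hg'' : HasDerivAt (deriv g) (iteratedDeriv 2 g 0) 0 := by
    rw [iteratedDeriv_succ, iteratedDeriv_one]
    exact (hg.differentiable_deriv_two 0).hasDerivAt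
  obtain ⟨x₀, hx₀, hgood⟩ := mem_nhdsGT_iff_exists_Ioo_subset.mp <|
    eventually_mem_Ioo_and_comp_neg_inv_log_ne_zero (hgd 0).hasDerivAt (hg'0 ▸ one_ne_zero)
  have hHF : EqOn H (fun x => exp (-(g (-(log x)⁻¹))⁻¹)) (Ioo 0 x₀) := fun x hx =>
    (hH x).trans (if_pos (hgood hx).1)
  have hlim : Tendsto (deriv H) (𝓝[>] 0) (𝓝 (exp (iteratedDeriv 2 g 0 / 2))) :=
    (tendsto_deriv_exp_neg_inv_comp_neg_inv_log hgd hg'' hg0 hg'0).congr' <|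
      eventually_of_mem (Ioo_mem_nhdsGT hx₀) fun x hx =>
        (hHF.eventuallyEq_of_mem (isOpen_Ioo.mem_nhds hx)).deriv_eq.symm
  have hderiv_zero : HasDerivWithinAt H (exp (iteratedDeriv 2 g 0 / 2)) (Ici 0) 0 := by
    rw [← hasDerivWithinAt_Ioi_iff_Ici, hasDerivWithinAt_iff_tendsto_slope' (s := Ioi 0)
      (lt_irrefl 0)]
    refine (tendsto_exp_neg_inv_comp_neg_inv_log_div_self hgd hg'' hg0 hg'0).congr' <|
      eventually_of_mem (Ioo_mem_nhdsGT hx₀) fun x hx => ?_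
    rw [slope_def_field, hHF hx, hH 0, if_neg (lt_irrefl 0 ∘ And.left), sub_zero, sub_zero]
  have hC1 : ContDiffOn ℝ 1 H (Ioo 0 x₀) := fun x hx =>
    (contDiffAt_exp_neg_inv_comp_neg_inv_log (hg.of_le one_le_two) hx.1.ne'
      (log_neg hx.1 (hgood hx).1.2).ne (hgood hx).2).contDiffWithinAt.congr hHF (hHF hx)
  exact ⟨x₀, hx₀, contDiffOn_one_Ico_of_tendsto_deriv hx₀ hC1 hderiv_zero hlim,
    hderiv_zero, hlim⟩

theorem stmt_11 (g : ℝ → ℝ) (r : ℝ) (hr : 0 < r)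
    (hg : ContDiff ℝ 2 g) (hg0 : g 0 = 0) (hg'0 : deriv g 0 = 1)
    (hgpos : ∀ y ∈ Set.Ioo (0 : ℝ) r, 0 < g y)
    (H : ℝ → ℝ)
    (hH : ∀ x : ℝ, H x = if 0 < x ∧ x < 1 then Real.exp (-(g (-(Real.log x)⁻¹))⁻¹) else 0) :
    ∃ x₀ > 0, ContDiffOn ℝ 1 H (Set.Ico 0 x₀) ∧
      HasDerivWithinAt H (Real.exp (iteratedDeriv 2 g 0 / 2)) (Set.Ici 0) 0 ∧
      Tendsto (deriv H) (nhdsWithin 0 (Set.Ioi 0))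
        (nhds (Real.exp (iteratedDeriv 2 g 0 / 2))) :=
  stmt_11_general g hg hg0 hg'0 H hH
end

section
/- Let 0 < λ < 1, 0 < Λ < 1, with A := ln λ / ln Λ irrational and A > 0, and let τ, ψ, ξ ∈ ℝ. Suppose (n_k) and (m_k) are sequences of natural numbers tending to infinity with m_k = A·n_k + τ + O(1/n_k). Then ψ·Λ^(m_k) − ξ·λ^(n_k) = (ψ·Λ^τ − ξ)·λ^(n_k) + o(λ^(n_k)) as k → ∞. -/
/-! Since `Λ ^ A = λ`, writing `m_k = A n_k + τ + ε_k` gives `Λ ^ m_k = λ ^ n_k Λ ^ τ Λ ^ ε_k`, so the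
error term is `ψ Λ ^ τ (Λ ^ ε_k - 1) λ ^ n_k` with `ε_k → 0`. -/

open Filter Asymptotics Topology

theorem tendsto_zero_of_abs_le_const_div_natCast {ι : Type*} {l : Filter ι} {n : ι → ℕ}
    (hn : Tendsto n l atTop) {x : ι → ℝ} {K : ℝ} (hx : ∀ k, 0 < n k → |x k| ≤ K / n k) :
    Tendsto x l (𝓝 0) := by
  refine squeeze_zero_norm' ?_ ((tendsto_const_div_atTop_nhds_zero_nat K).comp hn)
  filter_upwards [hn.eventually_gt_atTop 0] with k hk
  exact hx k hk

theorem isLittleO_mul_of_tendsto_zero {ι : Type*} {l : Filter ι} {g f : ι → ℝ}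
    (hg : Tendsto g l (𝓝 0)) : (fun k => g k * f k) =o[l] f := by
  simpa using ((isLittleO_one_iff ℝ).mpr hg).mul_isBigO (isBigO_refl f l)

theorem rpow_natCast_eq_pow_mul_rpow_mul_rpow_sub {b : ℝ} (hb : 0 < b) (A τ : ℝ) (n m : ℕ) :
    b ^ m = (b ^ A) ^ n * b ^ τ * b ^ ((m : ℝ) - (A * n + τ)) := by
  rw [← Real.rpow_natCast (b ^ A), ← Real.rpow_mul hb.le, ← Real.rpow_add hb, ← Real.rpow_add hb,
    ← Real.rpow_natCast]
  ring_nf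

theorem stmt_16_general (lam Lam A τ ψ ξ : ℝ)
    (hlam0 : 0 < lam) (hLam0 : 0 < Lam) (hLam1 : Lam < 1)
    (hA : A = Real.log lam / Real.log Lam)
    (n m : ℕ → ℕ) (hn : Tendsto n atTop atTop)
    (hm : ∃ K : ℝ, ∀ k : ℕ, 0 < n k →
      |(m k : ℝ) - (A * n k + τ)| ≤ K / n k) :
    (fun k => ψ * Lam ^ (m k) - ξ * lam ^ (n k) - (ψ * Lam ^ τ - ξ) * lam ^ (n k))
      =o[atTop] fun k => lam ^ (n k) := by
  obtain ⟨K, hK⟩ := hm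
  have hpow : Lam ^ A = lam := by
    rw [hA, Real.log_div_log, Real.rpow_logb hLam0 hLam1.ne hlam0]
  set ε : ℕ → ℝ := fun k => (m k : ℝ) - (A * n k + τ)
  have hε : Tendsto ε atTop (𝓝 0) := tendsto_zero_of_abs_le_const_div_natCast hn hK
  have hgap : Tendsto (fun k => ψ * Lam ^ τ * (Lam ^ ε k - 1)) atTop (𝓝 0) := by
    have hLamε := (Real.continuousAt_const_rpow (b := 0) hLam0.ne').tendsto.comp hε
    simpa using (hLamε.sub_const 1).const_mul (ψ * Lam ^ τ)
  refine (isLittleO_mul_of_tendsto_zero hgap).congr_left fun k => ?_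
  rw [rpow_natCast_eq_pow_mul_rpow_mul_rpow_sub hLam0 A τ (n k) (m k), hpow]
  ring

theorem stmt_16 (lam Lam A τ ψ ξ : ℝ)
    (hlam0 : 0 < lam) (hlam1 : lam < 1) (hLam0 : 0 < Lam) (hLam1 : Lam < 1)
    (hA : A = Real.log lam / Real.log Lam) (hAirr : Irrational A) (hApos : 0 < A)
    (n m : ℕ → ℕ) (hn : Tendsto n atTop atTop)
    (hm : ∃ K : ℝ, ∀ k : ℕ, 0 < n k →
      |(m k : ℝ) - (A * n k + τ)| ≤ K / n k) :
    (fun k => ψ * Lam ^ (m k) - ξ * lam ^ (n k) - (ψ * Lam ^ τ - ξ) * lam ^ (n k))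
      =o[atTop] fun k => lam ^ (n k) :=
  stmt_16_general lam Lam A τ ψ ξ hlam0 hLam0 hLam1 hA n m hn hm
end

section
/- Let 0 < Λ < 1, C > 0. For ε > 0 and x ∈ (ε, x₀) with x₀ < 1, suppose f(x, ε) = C·x^(Λ(ε)) + ε·(1 + ψ(x,ε)) where |Λ(ε) − Λ| ≤ M·ε and |ψ(x,ε)| ≤ 1/2 for small ε. Then there is k > 0 and ε₀ > 0 such that for all 0 < ε < ε₀ and all x ∈ (ε, x₀): (C − k·ε^(1−Λ))·x^Λ < f(x,ε) < (C + k·ε^(1−Λ))·x^Λ. -/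
/-! The perturbation of the exponent changes `x ^ Λ` by the factor `x ^ (Λ(ε) - Λ) = exp ((Λ(ε) - Λ) log x)`,
and since `ε < x < 1` the exponent is at most `M ε |log ε|`, so the factor is `1 + O(ε |log ε|)`.
The additive term `ε (1 + ψ)` is `O(ε)`, and `ε ≤ ε ^ (1 - Λ) x ^ Λ` for `x > ε`. Both errors are therefore
`O(ε ^ (1 - Λ) x ^ Λ)`, because `ε |log ε| = ε ^ (1 - Λ) (ε ^ Λ |log ε|)` and `ε ^ Λ log ε → 0`. -/

open Real Filter Set Topology

namespace Real

theorem abs_rpow_sub_rpow_le {x a b : ℝ} (hx : 0 < x) (h : |(a - b) * log x| ≤ 1) :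
    |x ^ a - x ^ b| ≤ 2 * |(a - b) * log x| * x ^ b := by
  have hsplit : x ^ a = x ^ b * exp ((a - b) * log x) := by
    rw [mul_comm (a - b), ← rpow_def_of_pos hx, ← rpow_add hx, add_sub_cancel]
  have hxb : 0 < x ^ b := rpow_pos_of_pos hx b
  calc |x ^ a - x ^ b| = x ^ b * |exp ((a - b) * log x) - 1| := by
        rw [hsplit, ← mul_sub_one, abs_mul, abs_of_pos hxb]
    _ ≤ x ^ b * (2 * |(a - b) * log x|) := by gcongr; exact abs_exp_sub_one_le h
    _ = 2 * |(a - b) * log x| * x ^ b := by ring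

theorem abs_log_le_abs_log_of_le {ε x : ℝ} (hε : 0 < ε) (hεx : ε ≤ x) (hx : x ≤ 1) :
    |log x| ≤ |log ε| := by
  have hlogx : log x ≤ 0 := log_nonpos (hε.trans_le hεx).le hx
  rw [abs_of_nonpos hlogx, abs_of_nonpos ((log_le_log hε hεx).trans hlogx), neg_le_neg_iff]
  exact log_le_log hε hεx

theorem le_rpow_mul_rpow {ε x Λ : ℝ} (hε : 0 < ε) (hεx : ε ≤ x) (hΛ : 0 ≤ Λ) :
    ε ≤ ε ^ (1 - Λ) * x ^ Λ :=
  calc ε = ε ^ (1 - Λ) * ε ^ Λ := by rw [← rpow_add hε, sub_add_cancel, rpow_one]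
    _ ≤ ε ^ (1 - Λ) * x ^ Λ := by gcongr

theorem eventually_mul_abs_log_le_rpow {a : ℝ} (ha : a < 1) :
    ∀ᶠ ε in 𝓝[>] (0 : ℝ), ε * |log ε| ≤ ε ^ a := by
  have hsmall : ∀ᶠ ε in 𝓝[>] (0 : ℝ), |log ε * ε ^ (1 - a)| ≤ 1 :=
    (tendsto_log_mul_rpow_nhdsGT_zero (sub_pos.mpr ha)).abs.eventually_le_const
      (by norm_num : |(0 : ℝ)| < 1)
  filter_upwards [hsmall, self_mem_nhdsWithin] with ε hε (hpos : 0 < ε)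
  rw [abs_mul, abs_of_pos (rpow_pos_of_pos hpos _)] at hε
  calc ε * |log ε| = ε ^ a * (|log ε| * ε ^ (1 - a)) := by
        rw [mul_left_comm, ← rpow_add hpos, add_sub_cancel, rpow_one]; ring
    _ ≤ ε ^ a := mul_le_of_le_one_right (rpow_pos_of_pos hpos a).le hε

theorem eventually_mul_mul_abs_log_le_one (M : ℝ) :
    ∀ᶠ ε in 𝓝[>] (0 : ℝ), M * ε * |log ε| ≤ 1 := by
  have hlim : Tendsto (fun ε ↦ M * (log ε * ε ^ (1 : ℝ))) (𝓝[>] 0) (𝓝 0) := by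
    simpa using (tendsto_log_mul_rpow_nhdsGT_zero one_pos).const_mul M
  filter_upwards [hlim.abs.eventually_le_const (by norm_num : |(0 : ℝ)| < 1), self_mem_nhdsWithin]
    with ε hε (hpos : 0 < ε)
  rw [rpow_one, abs_mul, abs_mul, abs_of_pos hpos] at hε
  calc M * ε * |log ε| = M * (|log ε| * ε) := by ring
    _ ≤ |M| * (|log ε| * ε) := by gcongr; exact le_abs_self M
    _ ≤ 1 := hε

theorem abs_perturbed_rpow_sub_rpow_le {C M Λ Λ' ψ ε x : ℝ} (hC : 0 ≤ C) (hΛ : 0 ≤ Λ)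
    (hε : 0 < ε) (hεx : ε < x) (hx : x < 1) (hΛ' : |Λ' - Λ| ≤ M * ε) (hψ : |ψ| ≤ 1 / 2)
    (hlog : M * ε * |log ε| ≤ 1) (hlog_rpow : ε * |log ε| ≤ ε ^ (1 - Λ)) :
    |C * x ^ Λ' + ε * (1 + ψ) - C * x ^ Λ| ≤ (2 * C * M + 3 / 2) * (ε ^ (1 - Λ) * x ^ Λ) := by
  have hx0 : 0 < x := hε.trans hεx
  have hM : 0 ≤ M := nonneg_of_mul_nonneg_left ((abs_nonneg _).trans hΛ') hε
  have hε_le : ε ≤ ε ^ (1 - Λ) * x ^ Λ := le_rpow_mul_rpow hε hεx.le hΛ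
  have hexponent : |(Λ' - Λ) * log x| ≤ M * ε * |log ε| := by
    rw [abs_mul]
    exact mul_le_mul hΛ' (abs_log_le_abs_log_of_le hε hεx.le hx.le) (abs_nonneg _) (by positivity)
  have hpow : |x ^ Λ' - x ^ Λ| ≤ 2 * M * (ε ^ (1 - Λ) * x ^ Λ) :=
    calc |x ^ Λ' - x ^ Λ| ≤ 2 * |(Λ' - Λ) * log x| * x ^ Λ :=
          abs_rpow_sub_rpow_le hx0 (hexponent.trans hlog)
      _ ≤ 2 * (M * ε * |log ε|) * x ^ Λ := by gcongr
      _ = 2 * M * (ε * |log ε|) * x ^ Λ := by ring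
      _ ≤ 2 * M * ε ^ (1 - Λ) * x ^ Λ := by gcongr
      _ = 2 * M * (ε ^ (1 - Λ) * x ^ Λ) := by ring
  have hshift : |ε * (1 + ψ)| ≤ 3 / 2 * (ε ^ (1 - Λ) * x ^ Λ) :=
    calc |ε * (1 + ψ)| ≤ ε * (3 / 2) := by
          rw [abs_mul, abs_of_pos hε]
          gcongr
          linarith [abs_add_le 1 ψ, abs_one (α := ℝ)]
      _ ≤ 3 / 2 * (ε ^ (1 - Λ) * x ^ Λ) := by linarith
  calc |C * x ^ Λ' + ε * (1 + ψ) - C * x ^ Λ|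
      = |C * (x ^ Λ' - x ^ Λ) + ε * (1 + ψ)| := by ring_nf
    _ ≤ C * |x ^ Λ' - x ^ Λ| + |ε * (1 + ψ)| :=
        (abs_add_le _ _).trans_eq (by rw [abs_mul, abs_of_nonneg hC])
    _ ≤ C * (2 * M * (ε ^ (1 - Λ) * x ^ Λ)) + 3 / 2 * (ε ^ (1 - Λ) * x ^ Λ) := by gcongr
    _ = (2 * C * M + 3 / 2) * (ε ^ (1 - Λ) * x ^ Λ) := by ring

end Real

theorem stmt_17_general (Λ C M x₀ : ℝ) (hΛ0 : 0 < Λ) (hC : 0 < C)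
    (hM : 0 < M) (hx₀1 : x₀ < 1)
    (Λfun : ℝ → ℝ) (ψ : ℝ → ℝ → ℝ) (f : ℝ → ℝ → ℝ)
    (hf : ∀ x ε : ℝ, f x ε = C * x ^ (Λfun ε) + ε * (1 + ψ x ε))
    (hΛfun : ∃ ε₁ > 0, ∀ ε : ℝ, 0 < ε → ε < ε₁ →
      |Λfun ε - Λ| ≤ M * ε ∧ ∀ x ∈ Set.Ioo ε x₀, |ψ x ε| ≤ 1/2) :
    ∃ k > 0, ∃ ε₀ > 0, ∀ ε : ℝ, 0 < ε → ε < ε₀ → ∀ x ∈ Set.Ioo ε x₀,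
      (C - k * ε ^ (1 - Λ)) * x ^ Λ < f x ε ∧
      f x ε < (C + k * ε ^ (1 - Λ)) * x ^ Λ := by
  obtain ⟨ε₁, hε₁, hyp⟩ := hΛfun
  have hsmall : ∀ᶠ ε in 𝓝[>] (0 : ℝ),
      ε < ε₁ ∧ M * ε * |log ε| ≤ 1 ∧ ε * |log ε| ≤ ε ^ (1 - Λ) :=
    (eventually_nhdsWithin_of_eventually_nhds (eventually_lt_nhds hε₁)).and
      ((eventually_mul_mul_abs_log_le_one M).and (eventually_mul_abs_log_le_rpow (by linarith)))
  obtain ⟨ε₀, hε₀, hε₀_sub⟩ := mem_nhdsGT_iff_exists_Ioo_subset.mp hsmall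
  -- one more than the constant of `abs_perturbed_rpow_sub_rpow_le`, to make the bounds strict
  refine ⟨2 * C * M + 5 / 2, by positivity, ε₀, hε₀, fun ε hε hεε₀ x ⟨hεx, hxx₀⟩ ↦ ?_⟩
  obtain ⟨hεε₁, hlog, hlog_rpow⟩ := hε₀_sub ⟨hε, hεε₀⟩
  obtain ⟨hΛ', hψ⟩ := hyp ε hε hεε₁
  have hbound := abs_perturbed_rpow_sub_rpow_le hC.le hΛ0.le hε hεx (hxx₀.trans hx₀1) hΛ'
    (hψ x ⟨hεx, hxx₀⟩) hlog hlog_rpow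
  have hscale : 0 < ε ^ (1 - Λ) * x ^ Λ := by
    have := hε.trans hεx
    positivity
  rw [← hf] at hbound
  constructor <;> linarith [abs_le.mp hbound]

theorem stmt_17 (Λ C M x₀ : ℝ) (hΛ0 : 0 < Λ) (hΛ1 : Λ < 1) (hC : 0 < C)
    (hM : 0 < M) (hx₀0 : 0 < x₀) (hx₀1 : x₀ < 1)
    (Λfun : ℝ → ℝ) (ψ : ℝ → ℝ → ℝ) (f : ℝ → ℝ → ℝ)
    (hf : ∀ x ε : ℝ, f x ε = C * x ^ (Λfun ε) + ε * (1 + ψ x ε))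
    (hΛfun : ∃ ε₁ > 0, ∀ ε : ℝ, 0 < ε → ε < ε₁ →
      |Λfun ε - Λ| ≤ M * ε ∧ ∀ x ∈ Set.Ioo ε x₀, |ψ x ε| ≤ 1/2) :
    ∃ k > 0, ∃ ε₀ > 0, ∀ ε : ℝ, 0 < ε → ε < ε₀ → ∀ x ∈ Set.Ioo ε x₀,
      (C - k * ε ^ (1 - Λ)) * x ^ Λ < f x ε ∧
      f x ε < (C + k * ε ^ (1 - Λ)) * x ^ Λ :=
  stmt_17_general Λ C M x₀ hΛ0 hC hM hx₀1 Λfun ψ f hf hΛfun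
end
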